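/- Every simple finite-dimensional weight module over Ū is isomorphic to exactly one module from the list: V_α with α ∈ (ℂ∖ℤ) ∪ rℤ, or S_n^{lr} with l ∈ ℤ and 0 ≤ n ≤ r−2. -/

import Mathlib

noncomputable section

open scoped TensorProduct

namespace Unrolled

/-- `q^z = exp(π √-1 z / r)`. -/
def qc (r : ℕ) (z : ℂ) : ℂ := Complex.exp (Real.pi * Complex.I * z / r)

/-- `{z} = q^z - q^{-z}`. -/
def qbrk (r : ℕ) (z : ℂ) : ℂ := qc r z - qc r (-z)

/-- `[z] = {z}/{1}`. -/
def qint (r : ℕ) (z : ℂ) : ℂ := qbrk r z / qbrk r 1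

/-- `{n}! = ∏_{i=1}^n {i}`. -/
def qbrkFact (r n : ℕ) : ℂ := ∏ i ∈ Finset.range n, qbrk r ((i : ℂ) + 1)

/-- `[n]! = ∏_{i=1}^n [i]`. -/
def qintFact (r n : ℕ) : ℂ := ∏ i ∈ Finset.range n, qint r ((i : ℂ) + 1)

/-- The data of five operators `K, K⁻¹, H, E, F` on a complex vector space. -/
structure Ops (V : Type) [AddCommGroup V] [Module ℂ V] where
  K : Module.End ℂ V
  Kinv : Module.End ℂ V
  H : Module.End ℂ V
  E : Module.End ℂ V
  F : Module.End ℂ V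

/-- A module over the restricted unrolled quantum group `Ū = Ū_q^H(sl₂(ℂ))`:
five operators satisfying the defining relations of `Ū`. -/
structure Rep (r : ℕ) (V : Type) [AddCommGroup V] [Module ℂ V] extends Ops V where
  rel_KKinv : K * Kinv = 1
  rel_KinvK : Kinv * K = 1
  rel_HK : H * K = K * H
  rel_HE : H * E - E * H = (2 : ℂ) • E
  rel_HF : H * F - F * H = (-2 : ℂ) • F
  rel_KE : K * E = qc r 2 • (E * K)
  rel_KF : K * F = qc r (-2) • (F * K)
  rel_EF : E * F - F * E = (qbrk r 1)⁻¹ • (K - Kinv)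
  rel_Er : E ^ r = 0
  rel_Fr : F ^ r = 0

variable {V W U : Type} [AddCommGroup V] [Module ℂ V] [AddCommGroup W] [Module ℂ W]
  [AddCommGroup U] [Module ℂ U]

/-- A `Ū`-submodule: a subspace invariant under the five operators. -/
def Ops.Invariant (A : Ops V) (p : Submodule ℂ V) : Prop :=
  (∀ v ∈ p, A.K v ∈ p) ∧ (∀ v ∈ p, A.Kinv v ∈ p) ∧ (∀ v ∈ p, A.H v ∈ p) ∧
    (∀ v ∈ p, A.E v ∈ p) ∧ (∀ v ∈ p, A.F v ∈ p)

/-- A simple `Ū`-module: nonzero, with no nonzero proper invariant subspace. -/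
def Ops.IsSimple (A : Ops V) : Prop :=
  (∃ v : V, v ≠ 0) ∧ ∀ p : Submodule ℂ V, A.Invariant p → p = ⊥ ∨ p = ⊤

/-- A weight module: finite dimensional, a direct sum of `H`-eigenspaces, on which `K`
acts by `q^μ` on the `H`-eigenspace of eigenvalue `μ`. -/
structure IsWeight (r : ℕ) {V : Type} [AddCommGroup V] [Module ℂ V] (A : Ops V) : Prop where
  finDim : FiniteDimensional ℂ V
  sup_eigenspaces : (⨆ μ : ℂ, Module.End.eigenspace A.H μ) = ⊤
  K_apply : ∀ (μ : ℂ), ∀ v ∈ Module.End.eigenspace A.H μ, A.K v = qc r μ • v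

/-- A `Ū`-linear map. -/
def IsEquivariant (A : Ops V) (B : Ops W) (f : V →ₗ[ℂ] W) : Prop :=
  (∀ v, f (A.K v) = B.K (f v)) ∧ (∀ v, f (A.Kinv v) = B.Kinv (f v)) ∧
    (∀ v, f (A.H v) = B.H (f v)) ∧ (∀ v, f (A.E v) = B.E (f v)) ∧
    (∀ v, f (A.F v) = B.F (f v))

/-- Isomorphism of `Ū`-modules. -/
def OpsIso (A : Ops V) (B : Ops W) : Prop :=
  ∃ e : V ≃ₗ[ℂ] W, IsEquivariant A B (e : V →ₗ[ℂ] W)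

/-- The weight `α + r - 1 - 2i` of the basis vector `v_i` of the Verma module `V_α`. -/
def wt (r : ℕ) (α : ℂ) (i : ℕ) : ℂ := α + r - 1 - 2 * i

/-- The coefficient `{i}{i-α}/{1}²` occurring in `E v_i`. -/
def cE (r : ℕ) (α : ℂ) (i : ℕ) : ℂ := qbrk r i * qbrk r ((i : ℂ) - α) / qbrk r 1 ^ 2

/-- The Verma module `V_α` of highest weight `α + r - 1`, realized on `Fin r → ℂ`
with basis `v_0, …, v_{r-1}`. -/
def vermaOps (r : ℕ) (α : ℂ) : Ops (Fin r → ℂ) where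
  K := (Matrix.diagonal fun i : Fin r => qc r (wt r α (i : ℕ))).mulVecLin
  Kinv := (Matrix.diagonal fun i : Fin r => qc r (-wt r α (i : ℕ))).mulVecLin
  H := (Matrix.diagonal fun i : Fin r => wt r α (i : ℕ)).mulVecLin
  E := (Matrix.of fun i j : Fin r =>
    if (j : ℕ) = (i : ℕ) + 1 then cE r α (j : ℕ) else 0).mulVecLin
  F := (Matrix.of fun i j : Fin r =>
    if (i : ℕ) = (j : ℕ) + 1 then (1 : ℂ) else 0).mulVecLin

/-- `α_{l,n} = (l-1)r + n + 1`, so that `S_n^{lr}` is a quotient of `V_{α_{l,n}}`. -/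
def aln (r : ℕ) (l : ℤ) (n : ℕ) : ℂ := ((l : ℂ) - 1) * r + n + 1

/-- The simple module `S_n^{lr}` of highest weight `lr + n` and dimension `n+1`,
realized on `Fin (n+1) → ℂ`. -/
def smodOps (r : ℕ) (l : ℤ) (n : ℕ) : Ops (Fin (n + 1) → ℂ) where
  K := (Matrix.diagonal fun i : Fin (n + 1) => qc r (wt r (aln r l n) (i : ℕ))).mulVecLin
  Kinv := (Matrix.diagonal fun i : Fin (n + 1) => qc r (-wt r (aln r l n) (i : ℕ))).mulVecLin
  H := (Matrix.diagonal fun i : Fin (n + 1) => wt r (aln r l n) (i : ℕ)).mulVecLin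
  E := (Matrix.of fun i j : Fin (n + 1) =>
    if (j : ℕ) = (i : ℕ) + 1 then cE r (aln r l n) (j : ℕ) else 0).mulVecLin
  F := (Matrix.of fun i j : Fin (n + 1) =>
    if (i : ℕ) = (j : ℕ) + 1 then (1 : ℂ) else 0).mulVecLin

/-- `α ∈ (ℂ∖ℤ) ∪ rℤ`. -/
def goodα (r : ℕ) (α : ℂ) : Prop := (¬∃ n : ℤ, α = (n : ℂ)) ∨ ∃ m : ℤ, α = (r : ℂ) * m

/-!
Since `E` is nilpotent, a simple weight module contains a highest weight vector `v₀`, and the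
vectors `w i = F^i v₀` satisfy the formulas defining the basis of `V_α`, where `α + r - 1` is the
weight of `v₀`. Let `m ≤ r` be the first index with `w m = 0`. The `w i` with `i < m` are
`H`-eigenvectors for distinct eigenvalues spanning a submodule, so they form a basis and the module
is `V_α` truncated to its first `m` basis vectors. If `m < r`, then `E w_m = 0` forces
`{m - α} = 0`, which identifies the module with `S_{m-1}^{lr}`. If `m = r`, a zero coefficient
`{c - α}` with `0 < c < r` would make `w c, w (c+1), …` span a proper submodule, so `α` is not in
`ℤ ∖ rℤ`. Uniqueness holds because the dimension and the `H`-spectrum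
`{α + r - 1 - 2i | i < dim}` are isomorphism invariants.
-/

lemma qc_add (r : ℕ) (x y : ℂ) : qc r (x + y) = qc r x * qc r y := by
  simp only [qc, ← Complex.exp_add]; ring_nf

lemma qc_neg (r : ℕ) (z : ℂ) : qc r (-z) = (qc r z)⁻¹ := by
  simp only [qc, ← Complex.exp_neg]; ring_nf

lemma qc_natCast_self {r : ℕ} (hr : r ≠ 0) : qc r r = -1 := by
  rw [qc, mul_div_assoc, div_self (by exact_mod_cast hr), mul_one, Complex.exp_pi_mul_I]

lemma qbrk_neg (r : ℕ) (z : ℂ) : qbrk r (-z) = -qbrk r z := by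
  simp only [qbrk, neg_neg, neg_sub]

lemma qbrk_add_natCast_self {r : ℕ} (hr : r ≠ 0) (z : ℂ) : qbrk r (z + r) = -qbrk r z := by
  simp only [qbrk, neg_add, qc_add, qc_neg r (r : ℂ), qc_natCast_self hr]
  ring

lemma qbrk_eq_zero_iff {r : ℕ} (hr : r ≠ 0) (z : ℂ) :
    qbrk r z = 0 ↔ ∃ k : ℤ, z = k * r := by
  have hπ : (Real.pi : ℂ) ≠ 0 := by exact_mod_cast Real.pi_ne_zero
  have hr' : (r : ℂ) ≠ 0 := by exact_mod_cast hr
  rw [qbrk, sub_eq_zero, qc, qc, Complex.exp_eq_exp_iff_exists_int]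
  refine exists_congr fun k => ⟨fun h => ?_, fun h => ?_⟩
  · field_simp at h
    exact mul_left_cancel₀ (by simp [hπ, Complex.I_ne_zero] : (2 * Real.pi * Complex.I : ℂ) ≠ 0)
      (by linear_combination (Real.pi * Complex.I) * h)
  · subst h
    field_simp
    ring

lemma qbrk_natCast_ne_zero {r m : ℕ} (h0 : 0 < m) (hm : m < r) : qbrk r m ≠ 0 := by
  rw [Ne, qbrk_eq_zero_iff (by omega)]
  rintro ⟨k, hk⟩
  have hk' : (m : ℤ) = k * r := by exact_mod_cast hk
  rcases lt_trichotomy k 0 with h | h | h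
  · nlinarith
  · simp [h] at hk'; omega
  · nlinarith

lemma qbrk_one_ne_zero {r : ℕ} (hr : 2 ≤ r) : qbrk r 1 ≠ 0 := by
  simpa using qbrk_natCast_ne_zero (r := r) (m := 1) one_pos (by omega)

lemma qbrk_add_one_mul_qbrk_add_one (r : ℕ) (a b : ℂ) :
    qbrk r (a + 1) * qbrk r (b + 1) = qbrk r a * qbrk r b + qbrk r 1 * qbrk r (a + b + 1) := by
  have ha := Complex.exp_ne_zero (Real.pi * Complex.I * a / r)
  have hb := Complex.exp_ne_zero (Real.pi * Complex.I * b / r)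
  have h1 := Complex.exp_ne_zero (Real.pi * Complex.I * 1 / r)
  simp only [qbrk, qc_neg, qc_add]
  simp only [qc] at *
  field_simp
  ring

lemma cE_zero (r : ℕ) (α : ℂ) : cE r α 0 = 0 := by
  simp [cE, qbrk]

lemma cE_succ {r : ℕ} (hr : 2 ≤ r) (α : ℂ) (i : ℕ) :
    cE r α (i + 1) = cE r α i + qbrk r (wt r α i) / qbrk r 1 := by
  have hwt : qbrk r (wt r α i) = qbrk r (i + (i - α) + 1) := by
    rw [show wt r α i = -(i + (i - α) + 1) + r by unfold wt; ring,
      qbrk_add_natCast_self (by omega), qbrk_neg, neg_neg]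
  have h1 := qbrk_one_ne_zero hr
  simp only [cE, hwt, Nat.cast_succ, show (i : ℂ) + 1 - α = (i - α) + 1 by ring,
    qbrk_add_one_mul_qbrk_add_one]
  field_simp

lemma cE_eq_zero_iff {r c : ℕ} (hr : 2 ≤ r) (hc0 : 0 < c) (hcr : c < r) (α : ℂ) :
    cE r α c = 0 ↔ ∃ k : ℤ, (c : ℂ) - α = k * r := by
  rw [← qbrk_eq_zero_iff (by omega), cE, div_eq_zero_iff, mul_eq_zero]
  simp [qbrk_natCast_ne_zero hc0 hcr, qbrk_one_ne_zero hr]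

lemma exists_cE_eq_zero_of_not_goodα {r : ℕ} (hr : 2 ≤ r) {α : ℂ} (h : ¬goodα r α) :
    ∃ c, 0 < c ∧ c < r ∧ cE r α c = 0 := by
  rw [goodα, not_or, not_not] at h
  obtain ⟨⟨a, rfl⟩, hna⟩ := h
  have hmod : a % r ≠ 0 := fun h0 => hna ⟨a / r, by
    exact_mod_cast (Int.mul_ediv_cancel' (Int.dvd_of_emod_eq_zero h0)).symm⟩
  have hlt : a % r < r := Int.emod_lt_of_pos a (by omega)
  have hnn : 0 ≤ a % r := Int.emod_nonneg a (by omega)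
  refine ⟨(a % r).toNat, by omega, by omega, (cE_eq_zero_iff hr (by omega) (by omega) _).2
    ⟨-(a / (r : ℤ)), ?_⟩⟩
  have hc : (((a % r).toNat : ℤ) : ℂ) = ((a - r * (a / r) : ℤ) : ℂ) := by
    rw [Int.toNat_of_nonneg hnn, Int.emod_def]
  push_cast at hc ⊢
  linear_combination hc

lemma exists_aln_eq_of_cE_eq_zero {r n : ℕ} (hr : 2 ≤ r) (hn : n + 1 < r) {α : ℂ}
    (h : cE r α (n + 1) = 0) : ∃ l : ℤ, α = aln r l n := by
  obtain ⟨k, hk⟩ := (cE_eq_zero_iff hr n.succ_pos hn α).1 h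
  exact ⟨1 - k, by unfold aln; push_cast at hk ⊢; linear_combination -hk⟩

lemma aln_left_injective {r : ℕ} (hr : r ≠ 0) (n : ℕ) : Function.Injective fun l => aln r l n :=
  fun l l' h => by
    have hr' : (r : ℂ) ≠ 0 := by exact_mod_cast hr
    simp only [aln] at h
    exact_mod_cast mul_right_cancel₀ hr' (by linear_combination h : (l : ℂ) * r = l' * r)

lemma wt_injective (r : ℕ) (α : ℂ) : Function.Injective (wt r α) := fun i j h => by
  unfold wt at h
  exact_mod_cast (by linear_combination (-1 / 2 : ℂ) * h : (i : ℂ) = j)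

lemma exists_pos_le_eq_zero_of_eq_zero {M : Type*} [Zero M] {f : ℕ → M} {n : ℕ}
    (h0 : f 0 ≠ 0) (hn : f n = 0) : ∃ m, 0 < m ∧ m ≤ n ∧ f m = 0 ∧ ∀ i < m, f i ≠ 0 := by
  classical
  have hex : ∃ m, f m = 0 := ⟨n, hn⟩
  refine ⟨Nat.find hex, Nat.pos_of_ne_zero fun h => h0 ?_, Nat.find_min' hex hn,
    Nat.find_spec hex, fun i => Nat.find_min hex⟩
  simpa [h] using Nat.find_spec hex

lemma _root_.Module.Basis.equivFun_apply_eq_mulVecLin {ι R M : Type*} [Fintype ι]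
    [DecidableEq ι] [CommRing R] [AddCommGroup M] [Module R M] (b : Module.Basis ι R M)
    {T : Module.End R M} {A : Matrix ι ι R} (h : ∀ i j, b.repr (T (b j)) i = A i j) (v : M) :
    b.equivFun (T v) = A.mulVecLin (b.equivFun v) := by
  have hA : LinearMap.toMatrix b b T = A := Matrix.ext fun i j => by
    rw [LinearMap.toMatrix_apply, h]
  simp [← hA, LinearMap.toMatrix_mulVec_repr]

lemma exists_eq_of_diagonal_mulVec_eq_smul {ι R : Type*} [Fintype ι] [DecidableEq ι]
    [CommRing R] [IsDomain R] {d u : ι → R} {μ : R} (hu : u ≠ 0)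
    (h : (Matrix.diagonal d).mulVec u = μ • u) : ∃ j, d j = μ := by
  obtain ⟨j, hj⟩ := Function.ne_iff.1 hu
  have hj' := congrFun h j
  rw [Matrix.mulVec_diagonal, Pi.smul_apply, smul_eq_mul] at hj'
  exact ⟨j, mul_right_cancel₀ hj hj'⟩

lemma Ops.invariant_span {A : Ops V} {s : Set V}
    (hK : ∀ v ∈ s, A.K v ∈ Submodule.span ℂ s) (hKinv : ∀ v ∈ s, A.Kinv v ∈ Submodule.span ℂ s)
    (hH : ∀ v ∈ s, A.H v ∈ Submodule.span ℂ s) (hE : ∀ v ∈ s, A.E v ∈ Submodule.span ℂ s)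
    (hF : ∀ v ∈ s, A.F v ∈ Submodule.span ℂ s) : A.Invariant (Submodule.span ℂ s) :=
  have key : ∀ T : Module.End ℂ V, (∀ v ∈ s, T v ∈ Submodule.span ℂ s) →
      ∀ v ∈ Submodule.span ℂ s, T v ∈ Submodule.span ℂ s :=
    fun T h _ hv => (Submodule.span_le (p := (Submodule.span ℂ s).comap T)).2 h hv
  ⟨key _ hK, key _ hKinv, key _ hH, key _ hE, key _ hF⟩

/-- `V_α` truncated to its first `d` basis vectors: `vermaOps r α` and `smodOps r l n` are, by
definition, the cases `d = r` and `(d, α) = (n + 1, aln r l n)`. -/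
def truncVermaOps (r d : ℕ) (α : ℂ) : Ops (Fin d → ℂ) where
  K := (Matrix.diagonal fun i : Fin d => qc r (wt r α (i : ℕ))).mulVecLin
  Kinv := (Matrix.diagonal fun i : Fin d => qc r (-wt r α (i : ℕ))).mulVecLin
  H := (Matrix.diagonal fun i : Fin d => wt r α (i : ℕ)).mulVecLin
  E := (Matrix.of fun i j : Fin d =>
    if (j : ℕ) = (i : ℕ) + 1 then cE r α (j : ℕ) else 0).mulVecLin
  F := (Matrix.of fun i j : Fin d =>
    if (i : ℕ) = (j : ℕ) + 1 then (1 : ℂ) else 0).mulVecLin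

lemma OpsIso.hasEigenvalue_H_iff {A : Ops V} {r d : ℕ} {α μ : ℂ}
    (h : OpsIso A (truncVermaOps r d α)) :
    A.H.HasEigenvalue μ ↔ ∃ j : Fin d, wt r α j = μ := by
  classical
  obtain ⟨e, -, -, he, -, -⟩ := h
  have he' : ∀ v, e (A.H v) = (Matrix.diagonal fun i : Fin d => wt r α i).mulVec (e v) := he
  constructor
  · intro hμ
    obtain ⟨v, hv, hv0⟩ := hμ.exists_hasEigenvector
    refine exists_eq_of_diagonal_mulVec_eq_smul (u := e v) (by simpa using hv0) ?_
    rw [← he', Module.End.mem_eigenspace_iff.1 hv, map_smul]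
  · rintro ⟨j, rfl⟩
    refine Module.End.hasEigenvalue_of_hasEigenvector
      (x := e.symm (Pi.single j 1)) ⟨Module.End.mem_eigenspace_iff.2 ?_, by simp⟩
    apply e.injective
    rw [he', map_smul, e.apply_symm_apply, Matrix.diagonal_mulVec_single, mul_one]
    ext i
    simp [Pi.single_apply]

lemma eq_of_opsIso_truncVermaOps {A : Ops V} {r d d' : ℕ} {α β : ℂ}
    (h : OpsIso A (truncVermaOps r d α)) (h' : OpsIso A (truncVermaOps r d' β)) (hd : 0 < d) :
    d = d' ∧ α = β := by
  obtain rfl : d = d' := by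
    obtain ⟨e, -⟩ := h
    obtain ⟨e', -⟩ := h'
    simpa using e.finrank_eq.symm.trans e'.finrank_eq
  refine ⟨rfl, ?_⟩
  obtain ⟨j, hj⟩ := h'.hasEigenvalue_H_iff.1 (h.hasEigenvalue_H_iff.2 ⟨⟨0, hd⟩, rfl⟩)
  obtain ⟨j', hj'⟩ := h.hasEigenvalue_H_iff.1 (h'.hasEigenvalue_H_iff.2 ⟨⟨0, hd⟩, rfl⟩)
  simp only [wt, Nat.cast_zero] at hj hj'
  have hsum : ((j + j' : ℕ) : ℂ) = 0 := by
    push_cast; linear_combination (-1 / 2 : ℂ) * (hj + hj')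
  obtain ⟨hj0, -⟩ := Nat.add_eq_zero_iff.1 (by exact_mod_cast hsum)
  simp only [hj0, Nat.cast_zero] at hj
  linear_combination -hj

namespace Rep

variable {r : ℕ} (ρ : Rep r V)

lemma H_E_apply (x : V) : ρ.H (ρ.E x) = ρ.E (ρ.H x) + (2 : ℂ) • ρ.E x :=
  sub_eq_iff_eq_add'.1 (LinearMap.congr_fun ρ.rel_HE x)

lemma H_F_apply (x : V) : ρ.H (ρ.F x) = ρ.F (ρ.H x) - (2 : ℂ) • ρ.F x := by
  have h := LinearMap.congr_fun ρ.rel_HF x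
  simp only [LinearMap.sub_apply, Module.End.mul_apply, neg_smul, LinearMap.neg_apply,
    LinearMap.smul_apply] at h
  rw [sub_eq_iff_eq_add'.1 h, sub_eq_add_neg]

lemma E_F_apply (x : V) :
    ρ.E (ρ.F x) = ρ.F (ρ.E x) + (qbrk r 1)⁻¹ • (ρ.K x - ρ.Kinv x) :=
  sub_eq_iff_eq_add'.1 (LinearMap.congr_fun ρ.rel_EF x)

lemma Kinv_apply_of_K_apply {x : V} {c : ℂ} (hc : c ≠ 0) (hx : ρ.K x = c • x) :
    ρ.Kinv x = c⁻¹ • x := by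
  have h := LinearMap.congr_fun ρ.rel_KinvK x
  rw [Module.End.mul_apply, hx, map_smul, Module.End.one_apply] at h
  rw [eq_inv_smul_iff₀ hc, h]

lemma exists_highestWeightVector [FiniteDimensional ℂ V] [Nontrivial V] :
    ∃ v₀ : V, ∃ μ : ℂ, v₀ ≠ 0 ∧ ρ.H v₀ = μ • v₀ ∧ ρ.E v₀ = 0 := by
  obtain ⟨μ, hμ⟩ := Module.End.exists_eigenvalue ρ.H
  obtain ⟨v, hv, hv0⟩ := hμ.exists_hasEigenvector
  have hH : ∀ k : ℕ, ρ.H ((ρ.E ^ k) v) = (μ + 2 * k) • (ρ.E ^ k) v := by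
    intro k
    induction k with
    | zero => simpa using Module.End.mem_eigenspace_iff.1 hv
    | succ k ih =>
      rw [pow_succ', Module.End.mul_apply, H_E_apply, ih, map_smul, ← add_smul]
      push_cast; ring_nf
  obtain ⟨m, hm0, -, hm, hlt⟩ := exists_pos_le_eq_zero_of_eq_zero (f := fun k => (ρ.E ^ k) v)
    (n := r) (by simpa using hv0) (by simp [ρ.rel_Er])
  refine ⟨(ρ.E ^ (m - 1)) v, _, hlt _ (by omega), hH _, ?_⟩
  rwa [← Module.End.mul_apply, ← pow_succ', Nat.sub_add_cancel hm0]

end Rep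

/-- `w` satisfies the formulas defining the basis `v_i` of `V_α`. -/
structure IsHighestWeightString {r : ℕ} (ρ : Rep r V) (α : ℂ) (w : ℕ → V) : Prop where
  H_apply : ∀ i, ρ.H (w i) = wt r α i • w i
  K_apply : ∀ i, ρ.K (w i) = qc r (wt r α i) • w i
  Kinv_apply : ∀ i, ρ.Kinv (w i) = qc r (-wt r α i) • w i
  /-- At `i = 0` the truncated `i - 1` is harmless since `cE r α 0 = 0`. -/
  E_apply : ∀ i, ρ.E (w i) = cE r α i • w (i - 1)
  F_apply : ∀ i, ρ.F (w i) = w (i + 1)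

lemma Rep.isHighestWeightString_F_pow {r : ℕ} (hr : 2 ≤ r) (ρ : Rep r V)
    (hw : IsWeight r ρ.toOps) {α : ℂ} {v₀ : V} (hH : ρ.H v₀ = wt r α 0 • v₀)
    (hE : ρ.E v₀ = 0) : IsHighestWeightString ρ α fun i => (ρ.F ^ i) v₀ := by
  have hF : ∀ i, ρ.F ((ρ.F ^ i) v₀) = (ρ.F ^ (i + 1)) v₀ := fun i => by
    rw [pow_succ', Module.End.mul_apply]
  have hwH : ∀ i, ρ.H ((ρ.F ^ i) v₀) = wt r α i • (ρ.F ^ i) v₀ := by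
    intro i
    induction i with
    | zero => simpa using hH
    | succ i ih =>
      rw [← hF, ρ.H_F_apply, ih, map_smul, ← sub_smul]
      congr 1; unfold wt; push_cast; ring
  have hwK : ∀ i, ρ.K ((ρ.F ^ i) v₀) = qc r (wt r α i) • (ρ.F ^ i) v₀ := fun i =>
    hw.K_apply _ _ (Module.End.mem_eigenspace_iff.2 (hwH i))
  have hwKinv : ∀ i, ρ.Kinv ((ρ.F ^ i) v₀) = qc r (-wt r α i) • (ρ.F ^ i) v₀ := fun i => by
    rw [qc_neg]
    exact ρ.Kinv_apply_of_K_apply (Complex.exp_ne_zero _) (hwK i)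
  refine ⟨hwH, hwK, hwKinv, fun i => ?_, hF⟩
  induction i with
  | zero => simpa [cE_zero] using hE
  | succ i ih =>
    rw [← hF, ρ.E_F_apply, ih, map_smul, hwK, hwKinv, cE_succ hr, ← sub_smul, smul_smul,
      add_smul, div_eq_inv_mul]
    congr 1
    rcases i with _ | i
    · simp [cE_zero]
    · rw [Nat.add_sub_cancel, hF]
      rfl

lemma Rep.exists_isHighestWeightString {r : ℕ} (hr : 2 ≤ r) (ρ : Rep r V)
    (hw : IsWeight r ρ.toOps) [Nontrivial V] :
    ∃ α w, IsHighestWeightString ρ α w ∧ w 0 ≠ 0 := by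
  have := hw.finDim
  obtain ⟨v₀, μ, hv₀, hH, hE⟩ := ρ.exists_highestWeightVector
  refine ⟨μ - r + 1, _, ρ.isHighestWeightString_F_pow hr hw ?_ hE, by simpa using hv₀⟩
  convert hH using 2
  simp only [wt]
  ring

namespace IsHighestWeightString

variable {r : ℕ} {ρ : Rep r V} {α : ℂ} {w : ℕ → V} (h : IsHighestWeightString ρ α w)
include h

lemma F_pow_apply (i k : ℕ) : (ρ.F ^ k) (w i) = w (i + k) := by
  induction k with
  | zero => simp
  | succ k ih => rw [pow_succ', Module.End.mul_apply, ih, h.F_apply, add_assoc]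

lemma eq_zero_of_le {m i : ℕ} (hm : w m = 0) (hi : m ≤ i) : w i = 0 := by
  rw [← Nat.add_sub_cancel' hi, ← h.F_pow_apply, hm, map_zero]

lemma invariant_span_tail {c : ℕ} (hc : cE r α c = 0) :
    ρ.toOps.Invariant (Submodule.span ℂ (Set.range fun i => w (c + i))) := by
  have mem : ∀ i, w (c + i) ∈ Submodule.span ℂ (Set.range fun i => w (c + i)) := fun i =>
    Submodule.subset_span ⟨i, rfl⟩
  apply Ops.invariant_span <;> rintro _ ⟨i, rfl⟩
  · exact (h.K_apply _).symm ▸ Submodule.smul_mem _ _ (mem i)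
  · exact (h.Kinv_apply _).symm ▸ Submodule.smul_mem _ _ (mem i)
  · exact (h.H_apply _).symm ▸ Submodule.smul_mem _ _ (mem i)
  · show ρ.E (w (c + i)) ∈ _
    rw [h.E_apply]
    rcases i with _ | i
    · simp [hc]
    · exact Submodule.smul_mem _ _ (by simpa using mem i)
  · exact (h.F_apply _).symm ▸ mem (i + 1)

lemma span_tail_eq_top (hs : ρ.toOps.IsSimple) {c : ℕ} (hc : cE r α c = 0) (hwc : w c ≠ 0) :
    Submodule.span ℂ (Set.range fun i => w (c + i)) = ⊤ :=
  (hs.2 _ (h.invariant_span_tail hc)).resolve_left fun hbot => hwc <| by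
    have hwc' : w (c + 0) ∈ Submodule.span ℂ (Set.range fun i => w (c + i)) :=
      Submodule.subset_span ⟨0, rfl⟩
    simpa [hbot] using hwc'

/-- `F ^ (m - c)` kills the span of `w c, w (c+1), …` but not `w 0`, so that span is proper. -/
lemma cE_ne_zero (hs : ρ.toOps.IsSimple) {m c : ℕ} (hm : w m = 0) (hne : ∀ i < m, w i ≠ 0)
    (hc0 : 0 < c) (hcm : c < m) : cE r α c ≠ 0 := by
  intro hc
  have hker : Submodule.span ℂ (Set.range fun i => w (c + i)) ≤ LinearMap.ker (ρ.F ^ (m - c)) :=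
    Submodule.span_le.2 <| by
      rintro _ ⟨i, rfl⟩
      exact (h.F_pow_apply _ _).trans (h.eq_zero_of_le hm (by omega))
  rw [h.span_tail_eq_top hs hc (hne c hcm)] at hker
  have hw0 := hker (Submodule.mem_top (x := w 0))
  rw [LinearMap.mem_ker, h.F_pow_apply, zero_add] at hw0
  exact hne _ (by omega) hw0

lemma goodα_of_isSimple (hs : ρ.toOps.IsSimple) (hr : 2 ≤ r) (hwr : w r = 0) (hne : ∀ i < r, w i ≠ 0) :
    goodα r α := by
  by_contra hbad
  obtain ⟨c, hc0, hcr, hc⟩ := exists_cE_eq_zero_of_not_goodα hr hbad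
  exact h.cE_ne_zero hs hwr hne hc0 hcr hc

lemma cE_eq_zero {n : ℕ} (hn : w n ≠ 0) (hn1 : w (n + 1) = 0) : cE r α (n + 1) = 0 := by
  have hE := h.E_apply (n + 1)
  rw [hn1, map_zero, Nat.add_sub_cancel] at hE
  exact (smul_eq_zero.1 hE.symm).resolve_right hn

lemma opsIso_truncVermaOps (hs : ρ.toOps.IsSimple) {m : ℕ} (hm0 : 0 < m) (hm : w m = 0)
    (hne : ∀ i < m, w i ≠ 0) : OpsIso ρ.toOps (truncVermaOps r m α) := by
  classical
  have hli : LinearIndependent ℂ fun i : Fin m => w i :=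
    ρ.H.eigenvectors_linearIndependent' (fun i : Fin m => wt r α i)
      ((wt_injective r α).comp Fin.val_injective) _
      fun i => ⟨Module.End.mem_eigenspace_iff.2 (h.H_apply i), hne i i.2⟩
  have hspan : ⊤ ≤ Submodule.span ℂ (Set.range fun i : Fin m => w i) := by
    rw [← h.span_tail_eq_top hs (cE_zero r α) (hne 0 hm0), Submodule.span_le]
    rintro _ ⟨i, rfl⟩
    by_cases hi : i < m
    · exact Submodule.subset_span ⟨⟨i, hi⟩, by simp⟩
    · simp [h.eq_zero_of_le hm (not_lt.1 hi)]
  set b := Module.Basis.mk hli hspan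
  have hb : ∀ j : Fin m, b j = w j := by simp [b]
  have hrepr : ∀ (i : Fin m) (k : ℕ), b.repr (w k) i = if (i : ℕ) = k then 1 else 0 := by
    intro i k
    by_cases hk : k < m
    · rw [← hb ⟨k, hk⟩, b.repr_self, Finsupp.single_apply]
      simp [Fin.ext_iff, eq_comm]
    · simp [h.eq_zero_of_le hm (not_lt.1 hk), show (i : ℕ) ≠ k by omega]
  refine ⟨b.equivFun, ?_, ?_, ?_, ?_, ?_⟩ <;>
    refine b.equivFun_apply_eq_mulVecLin fun i j => ?_ <;>
    simp only [hb, h.K_apply, h.Kinv_apply, h.H_apply, h.E_apply, h.F_apply, map_smul,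
      Finsupp.smul_apply, hrepr, smul_eq_mul, Matrix.diagonal_apply, Matrix.of_apply, Fin.ext_iff]
  all_goals
    rcases j with ⟨_ | j, hj⟩
    all_goals split_ifs <;> simp_all [cE_zero]

end IsHighestWeightString

/-- Every simple weight `Ū`-module is isomorphic to exactly one module from the list:
`V_α` with `α ∈ (ℂ∖ℤ) ∪ rℤ`, or `S_n^{lr}` with `l ∈ ℤ` and `0 ≤ n ≤ r-2`. -/
theorem stmt5 (r : ℕ) (hr : 2 ≤ r) (ρ : Rep r V)
    (hw : IsWeight r ρ.toOps) (hs : ρ.toOps.IsSimple) :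
    ((∃! α : ℂ, goodα r α ∧ OpsIso ρ.toOps (vermaOps r α)) ∧
      ¬∃ (l : ℤ) (n : ℕ), n ≤ r - 2 ∧ OpsIso ρ.toOps (smodOps r l n)) ∨
    ((¬∃ α : ℂ, goodα r α ∧ OpsIso ρ.toOps (vermaOps r α)) ∧
      ∃! p : ℤ × ℕ, p.2 ≤ r - 2 ∧ OpsIso ρ.toOps (smodOps r p.1 p.2)) := by
  obtain ⟨v, hv⟩ := hs.1
  have := nontrivial_of_ne v 0 hv
  obtain ⟨α, w, hstr, hw0⟩ := ρ.exists_isHighestWeightString hr hw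
  have hwr : w r = 0 := by simpa [ρ.rel_Fr] using (hstr.F_pow_apply 0 r).symm
  obtain ⟨m, hm0, hmr, hm, hne⟩ := exists_pos_le_eq_zero_of_eq_zero hw0 hwr
  have hiso := hstr.opsIso_truncVermaOps hs hm0 hm hne
  rcases hmr.lt_or_eq with hmr | rfl
  · obtain ⟨n, rfl⟩ : ∃ n, m = n + 1 := ⟨m - 1, by omega⟩
    obtain ⟨l, rfl⟩ :=
      exists_aln_eq_of_cE_eq_zero hr hmr (hstr.cE_eq_zero (hne n n.lt_succ_self) hm)
    refine Or.inr ⟨?_, ⟨(l, n), ⟨by omega, hiso⟩, ?_⟩⟩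
    · rintro ⟨β, -, hβ⟩
      have := (eq_of_opsIso_truncVermaOps hiso hβ n.succ_pos).1
      omega
    · rintro ⟨l', n'⟩ ⟨-, h'⟩
      obtain ⟨hn, hα⟩ := eq_of_opsIso_truncVermaOps hiso h' n.succ_pos
      obtain rfl : n = n' := by omega
      rw [aln_left_injective (by omega) n hα]
  · refine Or.inl ⟨⟨α, ⟨hstr.goodα_of_isSimple hs hr hm hne, hiso⟩, fun β hβ => ?_⟩, ?_⟩
    · exact (eq_of_opsIso_truncVermaOps hiso hβ.2 hm0).2.symm
    · rintro ⟨l, n, hn, h'⟩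
      have := (eq_of_opsIso_truncVermaOps hiso h' hm0).1
      omega

end Unrolled
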